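/- arXiv:1405.1601 — 5 statements merged into one kernel-verified Lean document; each statement's English description precedes it below -/
import Mathlib

section
/- For max{k, 2} ≤ m ≤ ⌊n/2⌋ and k ≥ 1, the graph K^k_{n-m,m} has edge connectivity exactly k. -/
/-- `matchCount G t` is the number of `t`-matchings of `G`, i.e. the number of
`t`-element sets of pairwise disjoint edges of `G`. -/
noncomputable def matchCount {V : Type*} (G : SimpleGraph V) (t : ℕ) : ℕ :=
  Nat.card {s : Finset (Sym2 V) // ↑s ⊆ G.edgeSet ∧ s.card = t ∧
    (s : Set (Sym2 V)).Pairwise fun e f => ∀ v, ¬(v ∈ e ∧ v ∈ f)}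

/-- The edge connectivity of a graph: the minimum number of edges whose
deletion disconnects the graph. -/
noncomputable def edgeConn {V : Type*} (G : SimpleGraph V) : ℕ :=
  sInf {j | ∃ F : Set (Sym2 V), F ⊆ G.edgeSet ∧ F.ncard = j ∧ ¬(G.deleteEdges F).Connected}

/-- The edge cut `∂(S)`: the set of edges of `G` with exactly one endpoint in `S`. -/
def edgeCut {V : Type*} (G : SimpleGraph V) (S : Set V) : Set (Sym2 V) :=
  {e | e ∈ G.edgeSet ∧ ∃ u ∈ S, ∃ v, v ∉ S ∧ e = s(u, v)}

/-- `Kstar n k` is the graph `K^k_{n-1,1}`: obtained from `K_1 ∪ K_{n-1}` by adding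
`k` edges joining the vertex of `K_1` (vertex `n-1`) to `k` distinct vertices of `K_{n-1}`. -/
def Kstar (n k : ℕ) : SimpleGraph (Fin n) :=
  SimpleGraph.fromRel (fun u v =>
    (u.val < n - 1 ∧ v.val < n - 1) ∨ (u.val < k ∧ v.val = n - 1))

/-- `Kmk n m k` is the graph `K^k_{n-m,m}`: obtained from `K_{n-m} ∪ K_m` by adding
`k` independent edges between the two parts. -/
def Kmk (n m k : ℕ) : SimpleGraph (Fin n) :=
  SimpleGraph.fromRel (fun u v =>
    (u.val < n - m ∧ v.val < n - m) ∨ (n - m ≤ u.val ∧ n - m ≤ v.val) ∨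
    (u.val < k ∧ v.val = n - m + u.val))

/-- The Hosoya index: the total number of matchings of `G`. -/
noncomputable def hosoya {V : Type*} [Fintype V] (G : SimpleGraph V) : ℕ :=
  ∑ t ∈ Finset.range (Fintype.card V / 2 + 1), matchCount G t

/-! Write `A` for the vertex set of `K_{n-m}`. The `k` matching edges are exactly the cut `∂A`,
so `κ' ≤ k`. Conversely, let `S` be a proper nonempty vertex set meeting `A` and its complement in
`a` and `b` vertices, and let `a'`, `b'` be the same numbers for the complement of `S`. At most
`min a b` matching edges lie inside `S` and at most `min a' b'` outside it; the others cross `∂S`.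
Since `∂S` also contains `a a' + b b'` edges of the two cliques and
`min a b + min a' b' ≤ a a' + b b'`, the cut `∂S` has at least `k` edges. -/

open SimpleGraph Function

lemma min_add_min_le_mul_add_mul {a b a' b' : ℕ} (h : 0 < a + b) (h' : 0 < a' + b') :
    min a b + min a' b' ≤ a * a' + b * b' := by
  rcases Nat.eq_zero_or_pos a' with rfl | ha'
  · have : min a b ≤ b * b' := (min_le_right a b).trans (Nat.le_mul_of_pos_right b (by omega))
    omega
  rcases Nat.eq_zero_or_pos b with rfl | hb
  · have : min a' b' ≤ a * a' := (min_le_left a' b').trans (Nat.le_mul_of_pos_left a' (by omega))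
    omega
  have := (min_le_left a b).trans (Nat.le_mul_of_pos_right a ha')
  have := (min_le_right a' b').trans (Nat.le_mul_of_pos_left b' hb)
  omega

lemma ncard_and_add_ncard_not_and_not_add_ncard_not_iff {ι : Type*} [Finite ι] (p q : ι → Prop) :
    {i | p i ∧ q i}.ncard + {i | ¬p i ∧ ¬q i}.ncard + {i | ¬(p i ↔ q i)}.ncard = Nat.card ι := by
  have hsame : {i | p i ↔ q i} = {i | p i ∧ q i} ∪ {i | ¬p i ∧ ¬q i} := by
    ext i
    simp only [Set.mem_ofPred_eq, Set.mem_union]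
    tauto
  have hdisj : Disjoint {i | p i ∧ q i} {i | ¬p i ∧ ¬q i} :=
    Set.disjoint_left.2 fun _ h h' => h'.1 h.1
  rw [← Set.ncard_union_eq hdisj, ← hsame, ← Set.compl_ofPred, Set.ncard_add_ncard_compl]

section EdgeCut

variable {V : Type*} {G : SimpleGraph V}

lemma mk_mem_edgeCut_iff {S : Set V} {u v : V} :
    s(u, v) ∈ edgeCut G S ↔ G.Adj u v ∧ ¬(u ∈ S ↔ v ∈ S) := by
  simp only [edgeCut, Set.mem_ofPred_eq, mem_edgeSet, Sym2.eq_iff]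
  constructor
  · rintro ⟨hadj, a, ha, b, hb, ⟨rfl, rfl⟩ | ⟨rfl, rfl⟩⟩ <;> tauto
  · rintro ⟨hadj, huv⟩
    refine ⟨hadj, ?_⟩
    by_cases hu : u ∈ S
    · exact ⟨u, hu, v, by tauto, Or.inl ⟨rfl, rfl⟩⟩
    · exact ⟨v, by tauto, u, hu, Or.inr ⟨rfl, rfl⟩⟩

lemma edgeCut_subset_edgeSet (S : Set V) : edgeCut G S ⊆ G.edgeSet := fun _ he => he.1

lemma not_reachable_deleteEdges_edgeCut {S : Set V} {x y : V} (hx : x ∈ S) (hy : y ∉ S) :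
    ¬(G.deleteEdges (edgeCut G S)).Reachable x y := by
  rintro ⟨p⟩
  obtain ⟨d, -, hd₁, hd₂⟩ := p.exists_boundary_dart S hx hy
  obtain ⟨hadj, hcut⟩ := (deleteEdges_adj ..).1 d.adj
  exact hcut (mk_mem_edgeCut_iff.2 ⟨hadj, by tauto⟩)

lemma exists_edgeCut_subset_of_not_connected_deleteEdges [Nonempty V] {F : Set (Sym2 V)}
    (h : ¬(G.deleteEdges F).Connected) : ∃ S : Set V, ∃ x ∈ S, ∃ y ∉ S, edgeCut G S ⊆ F := by
  obtain ⟨x, y, hxy⟩ : ∃ x y, ¬(G.deleteEdges F).Reachable x y := by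
    simpa [connected_iff, Preconnected] using h
  refine ⟨{v | (G.deleteEdges F).Reachable x v}, x, Reachable.refl x, y, hxy, fun e he => ?_⟩
  induction e using Sym2.ind with | h u v => ?_
  obtain ⟨hadj, hsep⟩ := mk_mem_edgeCut_iff.1 he
  by_contra hF
  have hadj' : (G.deleteEdges F).Adj u v := (deleteEdges_adj ..).2 ⟨hadj, hF⟩
  exact hsep ⟨fun hu => hu.trans hadj'.reachable, fun hv => hv.trans hadj'.symm.reachable⟩

lemma edgeConn_eq_ncard_edgeCut_of_forall_le [Finite V] {S₀ : Set V} {x₀ y₀ : V}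
    (hx₀ : x₀ ∈ S₀) (hy₀ : y₀ ∉ S₀)
    (hmin : ∀ S : Set V, ∀ x ∈ S, ∀ y ∉ S, (edgeCut G S₀).ncard ≤ (edgeCut G S).ncard) :
    edgeConn G = (edgeCut G S₀).ncard := by
  have hS₀ : (edgeCut G S₀).ncard ∈
      {j | ∃ F : Set (Sym2 V), F ⊆ G.edgeSet ∧ F.ncard = j ∧ ¬(G.deleteEdges F).Connected} :=
    ⟨_, edgeCut_subset_edgeSet S₀, rfl,
      fun h => not_reachable_deleteEdges_edgeCut hx₀ hy₀ (h.preconnected x₀ y₀)⟩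
  refine le_antisymm (Nat.sInf_le hS₀) ?_
  have : Nonempty V := ⟨x₀⟩
  obtain ⟨F, -, hF, hdis⟩ := Nat.sInf_mem ⟨_, hS₀⟩
  obtain ⟨S, x, hx, y, hy, hsub⟩ := exists_edgeCut_subset_of_not_connected_deleteEdges hdis
  rw [edgeConn, ← hF]
  exact (hmin S x hx y hy).trans (Set.ncard_le_ncard hsub)

lemma ncard_mul_ncard_le_ncard_edgeCut_inter_sym2 [Finite V] {C : Set V} (hC : G.IsClique C)
    (S : Set V) : (S ∩ C).ncard * (Sᶜ ∩ C).ncard ≤ (edgeCut G S ∩ C.sym2).ncard := by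
  rw [← Set.ncard_prod]
  refine Set.ncard_le_ncard_of_injOn (fun p => s(p.1, p.2)) ?_ ?_
  · rintro ⟨u, v⟩ ⟨⟨huS, huC⟩, hvS, hvC⟩
    have huv : u ≠ v := by rintro rfl; exact hvS huS
    exact ⟨mk_mem_edgeCut_iff.2 ⟨hC huC hvC huv, by tauto⟩, Set.mk_mem_sym2_iff.2 ⟨huC, hvC⟩⟩
  · rintro ⟨u, v⟩ ⟨⟨huS, -⟩, -⟩ ⟨u', v'⟩ ⟨-, hv'S, -⟩ h
    rcases Sym2.eq_iff.1 h with ⟨rfl, rfl⟩ | ⟨rfl, rfl⟩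
    · rfl
    · exact absurd huS hv'S

lemma ncard_inter_sym2_add_ncard_inter_sym2_compl_add_le [Finite V] (T : Set (Sym2 V))
    (A : Set V) :
    (T ∩ A.sym2).ncard + (T ∩ Aᶜ.sym2).ncard + (T ∩ edgeCut G A).ncard ≤ T.ncard := by
  have h₁ : Disjoint (T ∩ A.sym2) (T ∩ Aᶜ.sym2) := by
    refine Set.disjoint_left.2 fun e he he' => ?_
    induction e using Sym2.ind with | h u v => exact he'.2.1 he.2.1
  have h₂ : Disjoint (T ∩ A.sym2 ∪ T ∩ Aᶜ.sym2) (T ∩ edgeCut G A) := by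
    refine Set.disjoint_left.2 fun e he he' => ?_
    induction e using Sym2.ind with | h u v => ?_
    have hsep := (mk_mem_edgeCut_iff.1 he'.2).2
    rcases he with ⟨-, hu, hv⟩ | ⟨-, hu, hv⟩ <;> simp_all
  rw [← Set.ncard_union_eq h₁, ← Set.ncard_union_eq h₂]
  exact Set.ncard_le_ncard (by simp only [← Set.inter_union_distrib_left, Set.inter_subset_left])

variable {ι : Type*} {A : Set V} {f g : ι → V}

lemma injective_sym2_mk_of_mem_of_not_mem (hf : Injective f) (hfA : ∀ i, f i ∈ A)
    (hgA : ∀ i, g i ∉ A) : Injective fun i => s(f i, g i) := by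
  intro i j h
  rcases Sym2.eq_iff.1 h with ⟨h, -⟩ | ⟨h, -⟩
  · exact hf h
  · exact absurd (h ▸ hfA i) (hgA j)

theorem card_le_ncard_edgeCut_of_isClique [Finite V] (hA : G.IsClique A) (hAc : G.IsClique Aᶜ)
    (hf : Injective f) (hg : Injective g) (hfA : ∀ i, f i ∈ A) (hgA : ∀ i, g i ∉ A)
    (hadj : ∀ i, G.Adj (f i) (g i)) {S : Set V} {x y : V} (hx : x ∈ S) (hy : y ∉ S) :
    Nat.card ι ≤ (edgeCut G S).ncard := by
  have : Finite ι := Finite.of_injective f hf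
  have hin : {i | f i ∈ S ∧ g i ∈ S}.ncard ≤ min (S ∩ A).ncard (S ∩ Aᶜ).ncard :=
    le_min (Set.ncard_le_ncard_of_injOn f (fun i hi => ⟨hi.1, hfA i⟩) hf.injOn)
      (Set.ncard_le_ncard_of_injOn g (fun i hi => ⟨hi.2, hgA i⟩) hg.injOn)
  have hout : {i | f i ∉ S ∧ g i ∉ S}.ncard ≤ min (Sᶜ ∩ A).ncard (Sᶜ ∩ Aᶜ).ncard :=
    le_min (Set.ncard_le_ncard_of_injOn f (fun i hi => ⟨hi.1, hfA i⟩) hf.injOn)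
      (Set.ncard_le_ncard_of_injOn g (fun i hi => ⟨hi.2, hgA i⟩) hg.injOn)
  have hcross : {i | ¬(f i ∈ S ↔ g i ∈ S)}.ncard ≤ (edgeCut G S ∩ edgeCut G A).ncard :=
    Set.ncard_le_ncard_of_injOn _
      (fun i hi => ⟨mk_mem_edgeCut_iff.2 ⟨hadj i, hi⟩,
        mk_mem_edgeCut_iff.2 ⟨hadj i, by simp [hfA i, hgA i]⟩⟩)
      (injective_sym2_mk_of_mem_of_not_mem hf hfA hgA).injOn
  have hS : 0 < (S ∩ A).ncard + (S ∩ Aᶜ).ncard := by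
    rw [← Set.sdiff_eq, Set.ncard_inter_add_ncard_sdiff_eq_ncard]; exact (Set.ncard_pos).2 ⟨x, hx⟩
  have hSc : 0 < (Sᶜ ∩ A).ncard + (Sᶜ ∩ Aᶜ).ncard := by
    rw [← Set.sdiff_eq, Set.ncard_inter_add_ncard_sdiff_eq_ncard]; exact (Set.ncard_pos).2 ⟨y, hy⟩
  calc Nat.card ι
      = {i | f i ∈ S ∧ g i ∈ S}.ncard + {i | f i ∉ S ∧ g i ∉ S}.ncard
          + {i | ¬(f i ∈ S ↔ g i ∈ S)}.ncard :=
        (ncard_and_add_ncard_not_and_not_add_ncard_not_iff _ _).symm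
    _ ≤ (S ∩ A).ncard * (Sᶜ ∩ A).ncard + (S ∩ Aᶜ).ncard * (Sᶜ ∩ Aᶜ).ncard
          + (edgeCut G S ∩ edgeCut G A).ncard := by
        have := min_add_min_le_mul_add_mul hS hSc
        omega
    _ ≤ (edgeCut G S ∩ A.sym2).ncard + (edgeCut G S ∩ Aᶜ.sym2).ncard
          + (edgeCut G S ∩ edgeCut G A).ncard := by
        gcongr
        · exact ncard_mul_ncard_le_ncard_edgeCut_inter_sym2 hA S
        · exact ncard_mul_ncard_le_ncard_edgeCut_inter_sym2 hAc S
    _ ≤ (edgeCut G S).ncard := ncard_inter_sym2_add_ncard_inter_sym2_compl_add_le _ A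

theorem edgeConn_eq_card_of_isClique_of_edgeCut_eq_range [Finite V] (hA : G.IsClique A)
    (hAc : G.IsClique Aᶜ) (hA₀ : A.Nonempty) (hAc₀ : Aᶜ.Nonempty) (f g : ι → V)
    (hf : Injective f) (hg : Injective g) (hfA : ∀ i, f i ∈ A) (hgA : ∀ i, g i ∉ A)
    (hcut : edgeCut G A = Set.range fun i => s(f i, g i)) :
    edgeConn G = Nat.card ι := by
  have hadj (i : ι) : G.Adj (f i) (g i) :=
    edgeCut_subset_edgeSet A (hcut ▸ Set.mem_range_self (f := fun i => s(f i, g i)) i)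
  have hsize : (edgeCut G A).ncard = Nat.card ι := by
    rw [hcut, Set.ncard_range_of_injective (injective_sym2_mk_of_mem_of_not_mem hf hfA hgA)]
  obtain ⟨x, hx⟩ := hA₀
  obtain ⟨y, hy⟩ := hAc₀
  refine (edgeConn_eq_ncard_edgeCut_of_forall_le hx hy fun S x hx y hy => ?_).trans hsize
  rw [hsize]
  exact card_le_ncard_edgeCut_of_isClique hA hAc hf hg hfA hgA hadj hx hy

end EdgeCut

section Kmk

variable {n m k : ℕ}

lemma isClique_Kmk_low : (Kmk n m k).IsClique {v : Fin n | v.val < n - m} :=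
  fun _ hu _ hv huv => (fromRel_adj ..).2 ⟨huv, Or.inl (Or.inl ⟨hu, hv⟩)⟩

lemma isClique_Kmk_high : (Kmk n m k).IsClique {v : Fin n | v.val < n - m}ᶜ :=
  fun _ hu _ hv huv => (fromRel_adj ..).2 ⟨huv, Or.inl (Or.inr (Or.inl ⟨not_lt.1 hu, not_lt.1 hv⟩))⟩

lemma edgeCut_Kmk_low (hkm : k ≤ m) (hmn : 2 * m ≤ n) :
    edgeCut (Kmk n m k) {v : Fin n | v.val < n - m} =
      Set.range fun i : Fin k => s(⟨i, by omega⟩, ⟨n - m + i, by omega⟩) := by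
  ext e
  induction e using Sym2.ind with | h u v => ?_
  simp only [mk_mem_edgeCut_iff, Kmk, fromRel_adj, Set.mem_ofPred_eq, Set.mem_range,
    Sym2.eq_iff, Fin.ext_iff, ne_eq]
  constructor
  · rintro ⟨⟨-, hadj⟩, hsep⟩
    by_cases hu : u.val < n - m
    · exact ⟨⟨u, by omega⟩, Or.inl ⟨rfl, by dsimp only; omega⟩⟩
    · exact ⟨⟨v, by omega⟩, Or.inr ⟨rfl, by dsimp only; omega⟩⟩
  · rintro ⟨i, h | h⟩ <;> omega

end Kmk

theorem stmt4_general (n m k : ℕ) (hm1 : max k 2 ≤ m) (hm2 : m ≤ n / 2) :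
    edgeConn (Kmk n m k) = k := by
  have hkm : k ≤ m := le_of_max_le_left hm1
  have hmn : 2 * m ≤ n := by omega
  refine (edgeConn_eq_card_of_isClique_of_edgeCut_eq_range isClique_Kmk_low isClique_Kmk_high
    ⟨⟨0, by omega⟩, show 0 < n - m by omega⟩ ⟨⟨n - 1, by omega⟩, show ¬n - 1 < n - m by omega⟩
    _ _ ?_ ?_ ?_ ?_ (edgeCut_Kmk_low hkm hmn)).trans (Nat.card_fin k)
  · exact fun i j h => Fin.ext (Fin.mk.inj h)
  · exact fun i j h => Fin.ext (by have := Fin.mk.inj h; omega)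
  · exact fun i => show i.val < n - m by omega
  · exact fun i => show ¬n - m + i.val < n - m by omega

/-- For `max{k,2} ≤ m ≤ ⌊n/2⌋` and `k ≥ 1`, the graph `K^k_{n-m,m}` has edge
connectivity exactly `k`. -/
theorem stmt4 (n m k : ℕ) (hk : 1 ≤ k) (hm1 : max k 2 ≤ m) (hm2 : m ≤ n / 2) :
    edgeConn (Kmk n m k) = k :=
  stmt4_general n m k hm1 hm2
end

section
/- Let G be a connected simple graph of order n ≥ 2 with edge connectivity k (1 ≤ k ≤ n − 1) such that G is not isomorphic to K^k_{n-1,1} and G has a trivial k-edge cut. Then m(G,t) ≤ m(K^k_{n-1,1}, t) for all t = 0, 1, …, ⌊n/2⌋, with strict inequality for at least one t. -/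
/-! A vertex `v` whose trivial cut has `k` edges has degree `k`. Numbering `v` last and its
neighbours first embeds `G` as a spanning subgraph of `K^k_{n-1,1}`, so every `t`-matching of `G`
is one of `K^k_{n-1,1}`. Since `G` is not isomorphic to `K^k_{n-1,1}`, the embedding misses an
edge, which makes the inequality strict for `t = 1`. -/

namespace SimpleGraph

variable {V W : Type*} {G : SimpleGraph V} {H : SimpleGraph W}

theorem edgeCut_singleton (v : V) : edgeCut G {v} = G.incidenceSet v := by
  ext e
  constructor
  · rintro ⟨he, u, rfl, w, -, rfl⟩
    exact ⟨he, Sym2.mem_mk_left u w⟩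
  · rintro ⟨he, hv⟩
    induction e using Sym2.ind with
    | _ a b =>
      rcases Sym2.mem_iff.mp hv with rfl | rfl
      · exact ⟨he, _, rfl, _, (G.ne_of_adj he).symm, rfl⟩
      · exact ⟨he, _, rfl, _, G.ne_of_adj he, Sym2.eq_swap⟩

theorem ncard_edgeCut_singleton (v : V) :
    (edgeCut G {v}).ncard = (G.neighborSet v).ncard := by
  classical
  rw [edgeCut_singleton, ← Nat.card_coe_set_eq, ← Nat.card_coe_set_eq,
    Nat.card_congr (G.incidenceSetEquivNeighborSet v)]

theorem _root_.Sym2.map_disjoint_of_injective {f : V → W} (hf : Function.Injective f)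
    {e e' : Sym2 V} (h : ∀ v, ¬(v ∈ e ∧ v ∈ e')) (w : W) : ¬(w ∈ e.map f ∧ w ∈ e'.map f) := by
  rintro ⟨hw, hw'⟩
  obtain ⟨a, ha, rfl⟩ := Sym2.mem_map.mp hw
  obtain ⟨b, hb, hab⟩ := Sym2.mem_map.mp hw'
  exact h a ⟨ha, hf hab ▸ hb⟩

theorem matchCount_le_of_copy [Finite W] (f : Copy G H) (t : ℕ) :
    matchCount G t ≤ matchCount H t := by
  classical
  have hmap : Function.Injective (Sym2.map f) := Sym2.map.injective f.injective
  refine Nat.card_le_card_of_injective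
    (fun s => ⟨s.1.image (Sym2.map f), ?_, ?_, ?_⟩) fun s s' h =>
      Subtype.ext (Finset.image_injective hmap (congrArg Subtype.val h))
  · rw [Finset.coe_image]
    rintro _ ⟨e, he, rfl⟩
    exact (f.mapEdgeSet ⟨e, s.2.1 he⟩).2
  · rw [Finset.card_image_of_injective _ hmap, s.2.2.1]
  · rw [Finset.coe_image, hmap.injOn.pairwise_image]
    exact s.2.2.2.mono' fun e e' h => Sym2.map_disjoint_of_injective f.injective h

theorem Iso.matchCount_eq [Finite V] [Finite W] (e : G ≃g H) (t : ℕ) :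
    matchCount G t = matchCount H t :=
  (matchCount_le_of_copy e.toCopy t).antisymm (matchCount_le_of_copy e.symm.toCopy t)

theorem matchCount_mono [Finite V] {G₁ G₂ : SimpleGraph V} (h : G₁ ≤ G₂) (t : ℕ) :
    matchCount G₁ t ≤ matchCount G₂ t :=
  matchCount_le_of_copy (.ofLE G₁ G₂ h) t

theorem matchCount_one (G : SimpleGraph V) : matchCount G 1 = G.edgeSet.ncard := by
  classical
  rw [Set.ncard_def]
  refine (Nat.card_eq_of_bijective (fun e : G.edgeSet => ⟨{e.1}, by simp, by simp, by simp⟩)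
    ⟨fun e e' h => Subtype.ext (Finset.singleton_injective (congrArg Subtype.val h)),
      fun s => ?_⟩).symm
  obtain ⟨e, he⟩ := Finset.card_eq_one.mp s.2.2.1
  exact ⟨⟨e, s.2.1 (by simp [he])⟩, Subtype.ext he.symm⟩

end SimpleGraph

open Finset

theorem Finset.exists_equiv_fin_val_lt_iff_mem {α : Type*} [Fintype α] {n : ℕ}
    (hn : Fintype.card α = n) (s : Finset α) :
    ∃ e : α ≃ Fin n, ∀ a, (e a : ℕ) < #s ↔ a ∈ s := by
  classical
  let el : {a // a ∈ s} ≃ Fin #s := s.equivFinOfCardEq rfl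
  let es : {a // a ∉ s} ≃ Fin (n - #s) :=
    Fintype.equivFinOfCardEq (by rw [Fintype.card_subtype_compl, Fintype.card_coe, hn])
  let f := (Equiv.sumCompl (· ∈ s)).symm.trans ((el.sumCongr es).trans finSumFinEquiv)
  refine ⟨f.trans (finCongr (Nat.add_sub_of_le (hn ▸ s.card_le_univ))), fun a => ?_⟩
  by_cases ha : a ∈ s <;> simp [f, ha]

theorem Finset.exists_equiv_fin_last_of_notMem {α : Type*} [Fintype α] {n : ℕ}
    (hn : Fintype.card α = n) {s : Finset α} {v : α} (hv : v ∉ s) :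
    ∃ e : α ≃ Fin n, (e v : ℕ) = n - 1 ∧ ∀ a ∈ s, (e a : ℕ) < #s := by
  obtain ⟨e, he⟩ := exists_equiv_fin_val_lt_iff_mem hn s
  have hs : #s < n := hn ▸ card_lt_univ_of_notMem hv
  let last : Fin n := ⟨n - 1, by omega⟩
  have hv' : #s ≤ e v := not_lt.mp ((he v).not.mpr hv)
  refine ⟨e.trans (Equiv.swap (e v) last), by simp [last], fun a ha => ?_⟩
  have hlt := (he a).mpr ha
  rw [Equiv.trans_apply, Equiv.swap_apply_of_ne_of_ne (fun h => by omega)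
    (fun h => by simp [last, Fin.ext_iff] at h; omega)]
  exact hlt

theorem map_le_Kstar {V : Type*} {G : SimpleGraph V} {n k : ℕ} {v : V} (e : V ≃ Fin n)
    (hv : (e v : ℕ) = n - 1) (hN : ∀ u, G.Adj v u → (e u : ℕ) < k) :
    G.map e.toEmbedding ≤ Kstar n k := by
  have hlast : ∀ u, u ≠ v → (e u : ℕ) < n - 1 := fun u hu => by
    have := (e u).isLt
    have : (e u : ℕ) ≠ e v := fun h => hu (e.injective (Fin.ext h))
    omega
  refine (SimpleGraph.map_le_iff_le_comap _ _ _).mpr fun a b hab => ?_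
  simp only [SimpleGraph.comap_adj, Equiv.coe_toEmbedding, Kstar, SimpleGraph.fromRel_adj]
  refine ⟨e.injective.ne hab.ne, ?_⟩
  by_cases ha : a = v
  · subst ha; have := hN b hab; omega
  by_cases hb : b = v
  · subst hb; have := hN a hab.symm; omega
  have := hlast a ha; have := hlast b hb; omega

theorem exists_equiv_map_le_Kstar {V : Type*} [Fintype V] {G : SimpleGraph V} {n k : ℕ}
    (hn : Fintype.card V = n) {v : V} (hv : (G.neighborSet v).ncard = k) :
    ∃ e : V ≃ Fin n, G.map e.toEmbedding ≤ Kstar n k := by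
  classical
  have hs : #(G.neighborSet v).toFinset = k := by rw [← hv, Set.ncard_eq_toFinset_card']
  have hvN : v ∉ (G.neighborSet v).toFinset := by simp
  obtain ⟨e, hev, heN⟩ := Finset.exists_equiv_fin_last_of_notMem hn hvN
  exact ⟨e, map_le_Kstar e hev fun u hu => hs ▸ heN u (by simpa using hu)⟩

theorem stmt6_general {V : Type*} [Fintype V] (G : SimpleGraph V) (n k : ℕ)
    (hn : Fintype.card V = n) (hn2 : 2 ≤ n)
    (hniso : ¬ Nonempty (G ≃g Kstar n k))
    (htriv : ∃ v : V, (edgeCut G {v}).ncard = k) :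
    (∀ t : ℕ, t ≤ n / 2 → matchCount G t ≤ matchCount (Kstar n k) t) ∧
    (∃ t : ℕ, t ≤ n / 2 ∧ matchCount G t < matchCount (Kstar n k) t) := by
  obtain ⟨v, hv⟩ := htriv
  rw [SimpleGraph.ncard_edgeCut_singleton] at hv
  obtain ⟨e, hle⟩ := exists_equiv_map_le_Kstar hn hv
  let iso : G ≃g G.map e.toEmbedding := SimpleGraph.Iso.map e G
  have hlt : G.map e.toEmbedding < Kstar n k :=
    hle.lt_of_ne fun h => hniso ⟨h ▸ iso⟩
  refine ⟨fun t _ => (iso.matchCount_eq t).trans_le (SimpleGraph.matchCount_mono hle t),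
    1, by omega, ?_⟩
  rw [iso.matchCount_eq, SimpleGraph.matchCount_one, SimpleGraph.matchCount_one]
  exact Set.ncard_lt_ncard (SimpleGraph.edgeSet_ssubset_edgeSet.mpr hlt)

/-- If `G ≇ K^k_{n-1,1}` is connected of order `n ≥ 2` with edge connectivity `k`
(`1 ≤ k ≤ n − 1`) and has a trivial `k`-edge cut, then `m(G,t) ≤ m(K^k_{n-1,1},t)`
for all `t ≤ ⌊n/2⌋`, with strict inequality for at least one such `t`. -/
theorem stmt6 {V : Type*} [Fintype V] (G : SimpleGraph V) (n k : ℕ)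
    (hn : Fintype.card V = n) (hn2 : 2 ≤ n) (hG : G.Connected)
    (hk : edgeConn G = k) (hk1 : 1 ≤ k) (hk2 : k ≤ n - 1)
    (hniso : ¬ Nonempty (G ≃g Kstar n k))
    (htriv : ∃ v : V, (edgeCut G {v}).ncard = k) :
    (∀ t : ℕ, t ≤ n / 2 → matchCount G t ≤ matchCount (Kstar n k) t) ∧
    (∃ t : ℕ, t ≤ n / 2 ∧ matchCount G t < matchCount (Kstar n k) t) :=
  stmt6_general G n k hn hn2 hniso htriv
end

section
/- Let G_1 be a connected simple graph of order n with edge connectivity k having a k-edge cut ∂(S) such that the induced subgraphs G_1[S] and G_1[V∖S] are complete graphs K_m and K_{n-m} respectively, where k ≤ m ≤ ⌊n/2⌋. Suppose u_1, u_2 ∈ V∖S and v_1, v_2 ∈ S, that e_1 = u_1v_1 and e_2 = u_1v_2 are edges of ∂(S), and that u_2 is not incident with any edge of ∂(S). Let G_2 be obtained from G_1 by deleting e_2 and adding the edge u_2v_2. Then m(G_1,t) ≤ m(G_2,t) for all t, with strict inequality for some t (namely t = 2). -/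
/-!
Let `σ` be the transposition of `u₁` and `u₂`. A matching of `G₁` avoiding `u₁v₂` is also a
matching of `G₂`; a matching containing `u₁v₂` is sent to its image under `σ`, which replaces
`u₁v₂` by `u₂v₂` and an edge `u₂w` by `u₁w`. That image is a matching of `G₂` because every
neighbour `w ≠ u₁` of `u₂` lies outside `S` and is therefore adjacent to `u₁`. The map is
injective, since `u₂v₂ ∉ E(G₁)` tells the two kinds of matchings apart, and it misses the
2-matching `{u₂v₂, u₁v₁}` of `G₂`.
-/

section

variable {V : Type*}

def matchings (G : SimpleGraph V) (t : ℕ) : Set (Finset (Sym2 V)) :=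
  {M | ↑M ⊆ G.edgeSet ∧ M.card = t ∧
    (M : Set (Sym2 V)).Pairwise fun e f => ∀ v, ¬(v ∈ e ∧ v ∈ f)}

lemma matchCount_eq_ncard (G : SimpleGraph V) (t : ℕ) :
    matchCount G t = (matchings G t).ncard :=
  Nat.card_coe_set_eq _

lemma matchCount_le_of_injOn [Finite V] {G H : SimpleGraph V} {t : ℕ}
    {f : Finset (Sym2 V) → Finset (Sym2 V)} (hf : Set.MapsTo f (matchings G t) (matchings H t))
    (hinj : Set.InjOn f (matchings G t)) : matchCount G t ≤ matchCount H t := by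
  simpa only [matchCount_eq_ncard] using Set.ncard_le_ncard_of_injOn f hf hinj

lemma matchCount_lt_of_injOn [Finite V] {G H : SimpleGraph V} {t : ℕ}
    {f : Finset (Sym2 V) → Finset (Sym2 V)} (hf : Set.MapsTo f (matchings G t) (matchings H t))
    (hinj : Set.InjOn f (matchings G t)) {N : Finset (Sym2 V)} (hN : N ∈ matchings H t)
    (hN_not : ∀ M ∈ matchings G t, f M ≠ N) : matchCount G t < matchCount H t := by
  rw [matchCount_eq_ncard, matchCount_eq_ncard, ← hinj.ncard_image]
  refine Set.ncard_lt_ncard ((Set.ssubset_iff_of_subset hf.image_subset).2 ⟨N, hN, ?_⟩)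
  rintro ⟨M, hM, rfl⟩
  exact hN_not M hM rfl

lemma pairwise_disjoint_image_map {W : Type*} [DecidableEq W] {f : V → W}
    (hf : Function.Injective f) {M : Finset (Sym2 V)}
    (hM : (M : Set (Sym2 V)).Pairwise fun e e' => ∀ v, ¬(v ∈ e ∧ v ∈ e')) :
    ((M.image (Sym2.map f) : Finset (Sym2 W)) : Set (Sym2 W)).Pairwise
      fun e e' => ∀ w, ¬(w ∈ e ∧ w ∈ e') := by
  rw [Finset.coe_image, (Sym2.map.injective hf).injOn.pairwise_image]
  intro e he e' he' hne w ⟨hw, hw'⟩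
  obtain ⟨a, ha, rfl⟩ := Sym2.mem_map.1 hw
  obtain ⟨b, hb, hab⟩ := Sym2.mem_map.1 hw'
  exact hM he he' hne a ⟨ha, hf hab ▸ hb⟩

def rotateEdge (G : SimpleGraph V) (u₁ u₂ v : V) : SimpleGraph V :=
  G.deleteEdges {s(u₁, v)} ⊔ SimpleGraph.fromEdgeSet {s(u₂, v)}

section rotation

variable {G : SimpleGraph V} {u₁ u₂ v : V}

lemma mem_edgeSet_rotateEdge_of_ne {e : Sym2 V} (he : e ∈ G.edgeSet) (hne : e ≠ s(u₁, v)) :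
    e ∈ (rotateEdge G u₁ u₂ v).edgeSet := by
  rw [rotateEdge, SimpleGraph.edgeSet_sup, SimpleGraph.edgeSet_deleteEdges]
  exact Or.inl ⟨he, hne⟩

lemma mk_mem_edgeSet_rotateEdge (hne : u₂ ≠ v) : s(u₂, v) ∈ (rotateEdge G u₁ u₂ v).edgeSet := by
  rw [rotateEdge, SimpleGraph.edgeSet_sup, SimpleGraph.edgeSet_fromEdgeSet]
  exact Or.inr ⟨rfl, by simpa using hne⟩

variable [DecidableEq V]

lemma map_swap_map_swap (e : Sym2 V) :
    Sym2.map (Equiv.swap u₁ u₂) (Sym2.map (Equiv.swap u₁ u₂) e) = e := by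
  rw [Sym2.map_map, ← Equiv.coe_trans, Equiv.swap_swap, Equiv.coe_refl, Sym2.map_id, id]

lemma map_swap_mk_left {w : V} (h₁ : w ≠ u₁) (h₂ : w ≠ u₂) :
    Sym2.map (Equiv.swap u₁ u₂) s(u₁, w) = s(u₂, w) := by
  rw [Sym2.map_mk, Equiv.swap_apply_left, Equiv.swap_apply_of_ne_of_ne h₁ h₂]

lemma map_swap_eq_self {e : Sym2 V} (h₁ : u₁ ∉ e) (h₂ : u₂ ∉ e) :
    Sym2.map (Equiv.swap u₁ u₂) e = e := by
  induction e using Sym2.ind with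
  | _ a b =>
    simp only [Sym2.mem_iff, not_or] at h₁ h₂
    rw [Sym2.map_mk, Equiv.swap_apply_of_ne_of_ne (Ne.symm h₁.1) (Ne.symm h₂.1),
      Equiv.swap_apply_of_ne_of_ne (Ne.symm h₁.2) (Ne.symm h₂.2)]

lemma map_swap_mem_edgeSet_rotateEdge (hnadj : ¬G.Adj u₂ v)
    (hN : ∀ w, G.Adj u₂ w → w ≠ u₁ → G.Adj u₁ w) {e : Sym2 V} (he : e ∈ G.edgeSet)
    (hu₁e : u₁ ∉ e) : Sym2.map (Equiv.swap u₁ u₂) e ∈ (rotateEdge G u₁ u₂ v).edgeSet := by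
  by_cases hu₂e : u₂ ∈ e
  · obtain ⟨w, rfl⟩ := Sym2.mem_iff_exists.1 hu₂e
    have hw₁ : w ≠ u₁ := fun h => hu₁e (h ▸ Sym2.mem_mk_right _ _)
    rw [Equiv.swap_comm, map_swap_mk_left (G.ne_of_adj he).symm hw₁]
    refine mem_edgeSet_rotateEdge_of_ne (hN w he hw₁) fun h => hnadj ?_
    rwa [← Sym2.congr_right.1 h]
  · rw [map_swap_eq_self hu₁e hu₂e]
    exact mem_edgeSet_rotateEdge_of_ne he fun h => hu₁e (h ▸ Sym2.mem_mk_left _ _)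

def rotateMatching (u₁ u₂ v : V) (M : Finset (Sym2 V)) : Finset (Sym2 V) :=
  if s(u₁, v) ∈ M then M.image (Sym2.map (Equiv.swap u₁ u₂)) else M

lemma rotateMatching_mem_matchings (hnadj : ¬G.Adj u₂ v) (hne : u₂ ≠ v)
    (hN : ∀ w, G.Adj u₂ w → w ≠ u₁ → G.Adj u₁ w) {t : ℕ} {M : Finset (Sym2 V)}
    (hM : M ∈ matchings G t) : rotateMatching u₁ u₂ v M ∈ matchings (rotateEdge G u₁ u₂ v) t := by
  obtain ⟨hsub, hcard, hpair⟩ := hM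
  unfold rotateMatching
  split_ifs with hM₁
  · refine ⟨?_, ?_, pairwise_disjoint_image_map (Equiv.injective _) hpair⟩
    · intro x hx
      obtain ⟨e, he, rfl⟩ := Finset.mem_image.1 hx
      by_cases he₁ : e = s(u₁, v)
      · subst he₁
        rw [map_swap_mk_left (G.ne_of_adj (hsub hM₁)).symm hne.symm]
        exact mk_mem_edgeSet_rotateEdge hne
      · exact map_swap_mem_edgeSet_rotateEdge hnadj hN (hsub he)
          fun h => hpair hM₁ he (Ne.symm he₁) u₁ ⟨Sym2.mem_mk_left _ _, h⟩
    · rw [Finset.card_image_of_injective _ (Sym2.map.injective (Equiv.injective _)), hcard]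
  · exact ⟨fun e he => mem_edgeSet_rotateEdge_of_ne (hsub he) (by rintro rfl; exact hM₁ he),
      hcard, hpair⟩

lemma mem_rotateMatching_iff (hnadj : ¬G.Adj u₂ v) (hne : u₂ ≠ v) {M : Finset (Sym2 V)}
    (hM : ↑M ⊆ G.edgeSet) : s(u₂, v) ∈ rotateMatching u₁ u₂ v M ↔ s(u₁, v) ∈ M := by
  unfold rotateMatching
  split_ifs with hM₁
  · simp only [hM₁, iff_true]
    exact Finset.mem_image.2 ⟨_, hM₁, map_swap_mk_left (G.ne_of_adj (hM hM₁)).symm hne.symm⟩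
  · simp only [hM₁, iff_false]
    exact fun h => hnadj (hM h)

lemma rotateMatching_injOn (hnadj : ¬G.Adj u₂ v) (hne : u₂ ≠ v) :
    Set.InjOn (rotateMatching u₁ u₂ v) {M | ↑M ⊆ G.edgeSet} := by
  intro M hM M' hM' h
  have hiff : s(u₁, v) ∈ M ↔ s(u₁, v) ∈ M' := by
    rw [← mem_rotateMatching_iff hnadj hne hM, ← mem_rotateMatching_iff hnadj hne hM', h]
  unfold rotateMatching at h
  by_cases hM₁ : s(u₁, v) ∈ M
  · rw [if_pos hM₁, if_pos (hiff.1 hM₁)] at h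
    exact Finset.image_injective (Sym2.map.injective (Equiv.injective _)) h
  · rwa [if_neg hM₁, if_neg (hiff.not.1 hM₁)] at h

lemma rotateMatching_ne_pair {w : V} (hw₁ : w ≠ u₁) (hw₂ : w ≠ u₂) (hu₂w : ¬G.Adj u₂ w)
    (hnadj : ¬G.Adj u₂ v) (hne : u₂ ≠ v) {M : Finset (Sym2 V)} (hM : ↑M ⊆ G.edgeSet) :
    rotateMatching u₁ u₂ v M ≠ {s(u₂, v), s(u₁, w)} := by
  intro h
  have hM₁ : s(u₁, v) ∈ M :=
    (mem_rotateMatching_iff hnadj hne hM).1 (h ▸ Finset.mem_insert_self _ _)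
  rw [rotateMatching, if_pos hM₁] at h
  obtain ⟨e, he, hσe⟩ := Finset.mem_image.1 (h ▸ Finset.mem_insert_of_mem
    (Finset.mem_singleton_self s(u₁, w)))
  rw [← map_swap_map_swap (u₁ := u₁) (u₂ := u₂) e, hσe, map_swap_mk_left hw₁ hw₂] at he
  exact hu₂w (hM he)

lemma pair_mem_matchings_rotateEdge {w : V} (hadj : G.Adj u₁ v)
    (hnadj : ¬G.Adj u₂ v) (hne : u₂ ≠ v) (huw : G.Adj u₁ w) (hwv : w ≠ v) (hwu₂ : w ≠ u₂) :
    {s(u₂, v), s(u₁, w)} ∈ matchings (rotateEdge G u₁ u₂ v) 2 := by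
  have hu₁u₂ : u₁ ≠ u₂ := by rintro rfl; exact hnadj hadj
  have hvu₁ : v ≠ u₁ := (G.ne_of_adj hadj).symm
  have hdisj : ∀ x, ¬(x ∈ s(u₂, v) ∧ x ∈ s(u₁, w)) := by
    simp only [Sym2.mem_iff]
    rintro x ⟨rfl | rfl, rfl | rfl⟩ <;> simp_all
  have hpair : s(u₂, v) ≠ s(u₁, w) := fun h =>
    hdisj u₂ ⟨Sym2.mem_mk_left _ _, h ▸ Sym2.mem_mk_left _ _⟩
  refine ⟨?_, Finset.card_pair hpair, ?_⟩
  · rw [Finset.coe_pair, Set.insert_subset_iff, Set.singleton_subset_iff]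
    exact ⟨mk_mem_edgeSet_rotateEdge hne,
      mem_edgeSet_rotateEdge_of_ne huw fun h => hwv (Sym2.congr_right.1 h)⟩
  · rw [Finset.coe_pair, Set.pairwise_pair]
    exact fun _ => ⟨hdisj, fun x hx => hdisj x hx.symm⟩

end rotation

theorem matchCount_le_matchCount_rotateEdge [Finite V] {G : SimpleGraph V} {u₁ u₂ v : V}
    (hnadj : ¬G.Adj u₂ v) (hne : u₂ ≠ v) (hN : ∀ w, G.Adj u₂ w → w ≠ u₁ → G.Adj u₁ w) (t : ℕ) :
    matchCount G t ≤ matchCount (rotateEdge G u₁ u₂ v) t := by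
  classical
  exact matchCount_le_of_injOn (fun _ hM => rotateMatching_mem_matchings hnadj hne hN hM)
    ((rotateMatching_injOn hnadj hne).mono fun _ hM => hM.1)

theorem matchCount_two_lt_matchCount_rotateEdge [Finite V] {G : SimpleGraph V} {u₁ u₂ v w : V}
    (hadj : G.Adj u₁ v) (hnadj : ¬G.Adj u₂ v) (hne : u₂ ≠ v)
    (hN : ∀ w, G.Adj u₂ w → w ≠ u₁ → G.Adj u₁ w) (huw : G.Adj u₁ w) (hwv : w ≠ v)
    (hwu₂ : w ≠ u₂) (hu₂w : ¬G.Adj u₂ w) :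
    matchCount G 2 < matchCount (rotateEdge G u₁ u₂ v) 2 := by
  classical
  exact matchCount_lt_of_injOn (fun _ hM => rotateMatching_mem_matchings hnadj hne hN hM)
    ((rotateMatching_injOn hnadj hne).mono fun _ hM => hM.1)
    (pair_mem_matchings_rotateEdge hadj hnadj hne huw hwv hwu₂)
    fun M hM => rotateMatching_ne_pair (G.ne_of_adj huw).symm hwu₂ hu₂w hnadj hne hM.1

lemma not_adj_of_forall_notMem_edgeCut {G : SimpleGraph V} {S : Set V} {u w : V} (hu : u ∉ S)
    (hfree : ∀ e ∈ edgeCut G S, u ∉ e) (hw : w ∈ S) : ¬G.Adj u w :=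
  fun h => hfree _ ⟨G.adj_symm h, w, hw, u, hu, rfl⟩ (Sym2.mem_mk_right _ _)

end

theorem stmt9_general {V : Type*} [Fintype V] (G₁ : SimpleGraph V)
    (S : Set V)
    (hSccomp : ∀ a ∉ S, ∀ b ∉ S, a ≠ b → G₁.Adj a b)
    (u₁ u₂ v₁ v₂ : V) (hu₁ : u₁ ∉ S) (hu₂ : u₂ ∉ S) (hv₁ : v₁ ∈ S) (hv₂ : v₂ ∈ S)
    (hv12 : v₁ ≠ v₂)
    (he₁ : s(u₁, v₁) ∈ edgeCut G₁ S) (he₂ : s(u₁, v₂) ∈ edgeCut G₁ S)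
    (hu₂free : ∀ e ∈ edgeCut G₁ S, u₂ ∉ e) :
    (∀ t : ℕ, matchCount G₁ t ≤
        matchCount (G₁.deleteEdges {s(u₁, v₂)} ⊔ SimpleGraph.fromEdgeSet {s(u₂, v₂)}) t) ∧
    matchCount G₁ 2 <
      matchCount (G₁.deleteEdges {s(u₁, v₂)} ⊔ SimpleGraph.fromEdgeSet {s(u₂, v₂)}) 2 := by
  have hu₂S : ∀ w ∈ S, ¬G₁.Adj u₂ w := fun w hw =>
    not_adj_of_forall_notMem_edgeCut hu₂ hu₂free hw
  have hN : ∀ w, G₁.Adj u₂ w → w ≠ u₁ → G₁.Adj u₁ w := fun w hw hwu₁ =>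
    hSccomp u₁ hu₁ w (fun hwS => hu₂S w hwS hw) hwu₁.symm
  have hu₂v₂ : u₂ ≠ v₂ := fun h => hu₂ (h ▸ hv₂)
  exact ⟨matchCount_le_matchCount_rotateEdge (hu₂S v₂ hv₂) hu₂v₂ hN,
    matchCount_two_lt_matchCount_rotateEdge he₂.1 (hu₂S v₂ hv₂) hu₂v₂ hN he₁.1 hv12
      (fun h => hu₂ (h ▸ hv₁)) (hu₂S v₁ hv₁)⟩

/-- Operation I increases all matching numbers, strictly at `t = 2`. -/
theorem stmt9 {V : Type*} [Fintype V] (G₁ : SimpleGraph V) (n m k : ℕ)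
    (hn : Fintype.card V = n) (hG₁ : G₁.Connected) (hk : edgeConn G₁ = k)
    (S : Set V) (hcut : (edgeCut G₁ S).ncard = k) (hm : S.ncard = m)
    (hkm : k ≤ m) (hm2 : m ≤ n / 2)
    (hScomp : ∀ a ∈ S, ∀ b ∈ S, a ≠ b → G₁.Adj a b)
    (hSccomp : ∀ a ∉ S, ∀ b ∉ S, a ≠ b → G₁.Adj a b)
    (u₁ u₂ v₁ v₂ : V) (hu₁ : u₁ ∉ S) (hu₂ : u₂ ∉ S) (hv₁ : v₁ ∈ S) (hv₂ : v₂ ∈ S)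
    (hv12 : v₁ ≠ v₂)
    (he₁ : s(u₁, v₁) ∈ edgeCut G₁ S) (he₂ : s(u₁, v₂) ∈ edgeCut G₁ S)
    (hu₂free : ∀ e ∈ edgeCut G₁ S, u₂ ∉ e) :
    (∀ t : ℕ, matchCount G₁ t ≤
        matchCount (G₁.deleteEdges {s(u₁, v₂)} ⊔ SimpleGraph.fromEdgeSet {s(u₂, v₂)}) t) ∧
    matchCount G₁ 2 <
      matchCount (G₁.deleteEdges {s(u₁, v₂)} ⊔ SimpleGraph.fromEdgeSet {s(u₂, v₂)}) 2 :=
  stmt9_general G₁ S hSccomp u₁ u₂ v₁ v₂ hu₁ hu₂ hv₁ hv₂ hv12 he₁ he₂ hu₂free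
end

section
/- For every positive integer m and every t = 0, 1, …, m: m(K^1_{m,m}, t) ≤ m(K^1_{2m-1,1}, t). -/
/-!
`Kmk (2 * m) m 1` is the pair of cliques on `A = {0, …, m - 1}` and on `Aᶜ` joined by the edge
`zw` (`z = 0`, `w = m`), and `Kstar (2 * m) 1` contains, after swapping `m` and `2m - 1`, the clique
on all vertices but `w` together with the pendant edge `zw`. A matching `M` of the first graph
becomes one of the second under a single transposition `σ`: the identity if every edge at `w` is
`zw`; if `w` is matched to `v ≠ z` and `z` is unmatched, swap `w` and `z` (so `vw` becomes `vz`);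
if `z` is matched to `u`, swap `v` and `z` (so `vw, zu` become `zw, vu`). The map `M ↦ σ M` is
injective because `σ` can be read off `σ M`: it is the identity iff `σ M` has no edge `xy` with
`x ∈ A`, `y ∉ A` other than `zw`, and otherwise such an edge is `zv` in the second case and `uv`
with `u ≠ z` in the third.
-/

open Function

variable {V W : Type*}

def IsMatchingOfCard (G : SimpleGraph V) (t : ℕ) (s : Finset (Sym2 V)) : Prop :=
  ↑s ⊆ G.edgeSet ∧ s.card = t ∧
    (s : Set (Sym2 V)).Pairwise fun e f => ∀ v, ¬(v ∈ e ∧ v ∈ f)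

namespace IsMatchingOfCard

variable {G : SimpleGraph V} {t : ℕ} {s : Finset (Sym2 V)}

theorem not_isDiag (h : IsMatchingOfCard G t s) {e : Sym2 V} (he : e ∈ s) : ¬e.IsDiag :=
  G.not_isDiag_of_mem_edgeSet (h.1 he)

theorem ne_of_mk_mem (h : IsMatchingOfCard G t s) {x y : V} (hxy : s(x, y) ∈ s) : x ≠ y :=
  fun h' => h.not_isDiag hxy (Sym2.mk_isDiag_iff.2 h')

theorem eq_of_mem (h : IsMatchingOfCard G t s) {e f : Sym2 V} (he : e ∈ s) (hf : f ∈ s)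
    {x : V} (hxe : x ∈ e) (hxf : x ∈ f) : e = f := by
  by_contra hne
  exact h.2.2 he hf hne x ⟨hxe, hxf⟩

theorem image [DecidableEq W] {H : SimpleGraph W} (h : IsMatchingOfCard G t s) {f : V → W}
    (hf : Injective f) (hH : ∀ e ∈ s, Sym2.map f e ∈ H.edgeSet) :
    IsMatchingOfCard H t (s.image (Sym2.map f)) := by
  refine ⟨?_, ?_, ?_⟩
  · intro e' he'
    obtain ⟨e, he, rfl⟩ := Finset.mem_image.1 he'
    exact hH e he
  · rw [Finset.card_image_of_injective _ (Sym2.map.injective hf), h.2.1]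
  · simp only [Set.Pairwise, Finset.coe_image, Set.mem_image, Finset.mem_coe]
    rintro _ ⟨e, he, rfl⟩ _ ⟨e', he', rfl⟩ hne x ⟨hxe, hxe'⟩
    obtain ⟨a, ha, rfl⟩ := Sym2.mem_map.1 hxe
    obtain ⟨a', ha', hfa⟩ := Sym2.mem_map.1 hxe'
    rw [hf hfa] at ha'
    exact hne (congrArg _ (h.eq_of_mem he he' ha ha'))

end IsMatchingOfCard

theorem matchCount_le_of_rel [Finite W] {G : SimpleGraph V} {H : SimpleGraph W} {t : ℕ}
    (r : Finset (Sym2 V) → Finset (Sym2 W) → Prop)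
    (exists_rel : ∀ s, IsMatchingOfCard G t s → ∃ s', IsMatchingOfCard H t s' ∧ r s s')
    (eq_of_rel : ∀ s₁ s₂ s', IsMatchingOfCard G t s₁ → IsMatchingOfCard G t s₂ →
      r s₁ s' → r s₂ s' → s₁ = s₂) :
    matchCount G t ≤ matchCount H t := by
  choose f hf hrf using exists_rel
  let F : {s // IsMatchingOfCard G t s} → {s // IsMatchingOfCard H t s} :=
    fun s => ⟨f s.1 s.2, hf s.1 s.2⟩
  refine Nat.card_le_card_of_injective F fun s₁ s₂ h => Subtype.ext ?_
  have h' : f s₁.1 s₁.2 = f s₂.1 s₂.2 := congrArg Subtype.val h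
  exact eq_of_rel _ _ _ s₁.2 s₂.2 (hrf _ s₁.2) (h' ▸ hrf _ s₂.2)

theorem matchCount_le_of_injective [Finite W] {G : SimpleGraph V} {H : SimpleGraph W}
    (f : G →g H) (hf : Injective f) (t : ℕ) : matchCount G t ≤ matchCount H t := by
  classical
  exact matchCount_le_of_rel (fun s s' => s' = s.image (Sym2.map f))
    (fun s hs => ⟨_, hs.image hf fun e he => f.map_mem_edgeSet (hs.1 he), rfl⟩)
    (fun _ _ _ _ _ h₁ h₂ => Finset.image_injective (Sym2.map.injective hf) (h₁.symm.trans h₂))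

def bridgedCliques (A : Set V) (z w : V) : SimpleGraph V :=
  SimpleGraph.fromEdgeSet (A.sym2 ∪ Aᶜ.sym2 ∪ {s(z, w)})

def cliqueWithPendant (z w : V) : SimpleGraph V :=
  SimpleGraph.fromEdgeSet (({w}ᶜ : Set V).sym2 ∪ {s(z, w)})

theorem mem_edgeSet_cliqueWithPendant {z w : V} {e : Sym2 V} :
    e ∈ (cliqueWithPendant z w).edgeSet ↔ ¬e.IsDiag ∧ (w ∈ e → e = s(z, w)) := by
  induction e using Sym2.ind with
  | _ x y =>
    simp only [cliqueWithPendant, SimpleGraph.edgeSet_fromEdgeSet, Set.mem_sdiff, Set.mem_union,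
      Set.mk_mem_sym2_iff, Set.mem_singleton_iff, Set.mem_compl_iff, Sym2.mem_iff]
    tauto

theorem eq_of_mk_mem_edgeSet_bridgedCliques {A : Set V} {z w x y : V} (hz : z ∈ A)
    (h : s(x, y) ∈ (bridgedCliques A z w).edgeSet) (hx : x ∈ A) (hy : y ∉ A) : x = z ∧ y = w := by
  simp only [bridgedCliques, SimpleGraph.mem_edgeSet, SimpleGraph.fromEdgeSet_adj, Set.mem_union,
    Set.mk_mem_sym2_iff, Set.mem_compl_iff, Set.mem_singleton_iff] at h
  obtain ⟨(⟨-, hyA⟩ | ⟨hxA, -⟩) | hxy, -⟩ := h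
  · exact absurd hyA hy
  · exact absurd hx hxA
  · rcases Sym2.eq_iff.1 hxy with h | ⟨rfl, rfl⟩
    · exact h
    · exact absurd hz hy

theorem not_mem_of_mk_mem_edgeSet_bridgedCliques {A : Set V} {z w v : V} (hz : z ∈ A)
    (hw : w ∉ A) (h : s(v, w) ∈ (bridgedCliques A z w).edgeSet) (hvz : v ≠ z) : v ∉ A := fun hvA =>
  hvz (eq_of_mk_mem_edgeSet_bridgedCliques hz h hvA hw).1

section

variable [DecidableEq V] {A : Set V} {z w : V} {t : ℕ} {M : Finset (Sym2 V)} {σ : Equiv.Perm V}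

theorem mk_mem_image_swap {a b x y : V} :
    s(x, y) ∈ M.image (Sym2.map (Equiv.swap a b)) ↔
      s(Equiv.swap a b x, Equiv.swap a b y) ∈ M := by
  conv_lhs => rw [← Equiv.swap_apply_self a b x, ← Equiv.swap_apply_self a b y, ← Sym2.map_mk]
  exact (Sym2.map.injective (Equiv.swap a b).injective).mem_finset_image

inductive RepairSwap (z w : V) (M : Finset (Sym2 V)) : Equiv.Perm V → Prop
  | refl (h : ∀ e ∈ M, w ∈ e → e = s(z, w)) : RepairSwap z w M 1
  | swap_pendant {v : V} (hv : s(v, w) ∈ M) (hvz : v ≠ z) (hz : ∀ e ∈ M, z ∉ e) :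
      RepairSwap z w M (Equiv.swap w z)
  | swap_partner {u v : V} (hv : s(v, w) ∈ M) (hvz : v ≠ z) (hu : s(z, u) ∈ M) :
      RepairSwap z w M (Equiv.swap v z)

theorem exists_repairSwap (z w : V) (M : Finset (Sym2 V)) : ∃ σ, RepairSwap z w M σ := by
  by_cases hw : ∀ e ∈ M, w ∈ e → e = s(z, w)
  · exact ⟨1, .refl hw⟩
  push Not at hw
  obtain ⟨e, he, hwe, hne⟩ := hw
  obtain ⟨v, rfl⟩ := Sym2.mem_iff_exists.1 hwe
  rw [Sym2.eq_swap] at he hne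
  have hvz : v ≠ z := by
    rintro rfl
    exact hne rfl
  by_cases hz : ∃ u, s(z, u) ∈ M
  · obtain ⟨u, hu⟩ := hz
    exact ⟨_, .swap_partner he hvz hu⟩
  · refine ⟨_, .swap_pendant he hvz fun e he' hze => ?_⟩
    obtain ⟨u, rfl⟩ := Sym2.mem_iff_exists.1 hze
    exact hz ⟨u, he'⟩

namespace RepairSwap

theorem isMatchingOfCard_image {G : SimpleGraph V} (hσ : RepairSwap z w M σ)
    (hM : IsMatchingOfCard G t M) (hzw : z ≠ w) :
    IsMatchingOfCard (cliqueWithPendant z w) t (M.image (Sym2.map σ)) := by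
  refine hM.image σ.injective fun e he => mem_edgeSet_cliqueWithPendant.2
    ⟨(Sym2.isDiag_map σ.injective).not.2 (hM.not_isDiag he), fun hwe => ?_⟩
  obtain ⟨a, ha, hσa⟩ := Sym2.mem_map.1 hwe
  cases hσ with
  | refl h =>
    simp only [Equiv.Perm.coe_one, id_eq, Sym2.map_id'] at hσa ⊢
    exact h e he (hσa ▸ ha)
  | swap_pendant _ _ hz =>
    rw [Equiv.swap_apply_eq_iff, Equiv.swap_apply_left] at hσa
    exact absurd (hσa ▸ ha) (hz e he)
  | swap_partner hv _ _ =>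
    have hwv : w ≠ _ := (hM.ne_of_mk_mem hv).symm
    rw [Equiv.swap_apply_eq_iff, Equiv.swap_apply_of_ne_of_ne hwv hzw.symm] at hσa
    rw [hM.eq_of_mem he hv (hσa ▸ ha) (Sym2.mem_mk_right _ _), Sym2.map_mk,
      Equiv.swap_apply_left, Equiv.swap_apply_of_ne_of_ne hwv hzw.symm]

theorem eq_of_mk_mem_image (hσ : RepairSwap z w M σ)
    (hM : IsMatchingOfCard (bridgedCliques A z w) t M) (hz : z ∈ A) (hw : w ∉ A) {x y : V}
    (hx : x ∈ A) (hy : y ∉ A) (hxy : s(x, y) ∈ M.image (Sym2.map σ)) (hne : s(x, y) ≠ s(z, w)) :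
    σ = if x = z then Equiv.swap w z else Equiv.swap y z := by
  have hyz : y ≠ z := (ne_of_mem_of_not_mem hz hy).symm
  have hxw : x ≠ w := ne_of_mem_of_not_mem hx hw
  have not_cross : s(x, y) ∉ M := fun h => by
    obtain ⟨rfl, rfl⟩ := eq_of_mk_mem_edgeSet_bridgedCliques hz (hM.1 h) hx hy
    exact hne rfl
  cases hσ with
  | refl =>
    simp only [Equiv.Perm.coe_one, Sym2.map_id, Finset.image_id] at hxy
    exact absurd hxy not_cross
  | swap_pendant _ _ hzM =>
    rw [mk_mem_image_swap] at hxy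
    by_cases hxz : x = z
    · rw [if_pos hxz]
    rw [Equiv.swap_apply_of_ne_of_ne hxw hxz] at hxy
    by_cases hyw : y = w
    · rw [hyw, Equiv.swap_apply_left] at hxy
      exact absurd (Sym2.mem_mk_right x z) (hzM _ hxy)
    rw [Equiv.swap_apply_of_ne_of_ne hyw hyz] at hxy
    exact absurd hxy not_cross
  | @swap_partner u v hv hvz _ =>
    rw [mk_mem_image_swap] at hxy
    have hxv : x ≠ v :=
      ne_of_mem_of_not_mem hx (not_mem_of_mk_mem_edgeSet_bridgedCliques hz hw (hM.1 hv) hvz)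
    by_cases hxz : x = z
    · subst hxz
      rw [Equiv.swap_apply_right] at hxy
      have hσy := Sym2.congr_right.1 (hM.eq_of_mem hxy hv (Sym2.mem_mk_left _ _)
        (Sym2.mem_mk_left _ _))
      rw [Equiv.swap_apply_eq_iff, Equiv.swap_apply_of_ne_of_ne (hM.ne_of_mk_mem hv).symm
        hxw.symm] at hσy
      exact absurd (hσy ▸ rfl) hne
    rw [if_neg hxz]
    by_cases hyv : y = v
    · rw [hyv]
    rw [Equiv.swap_apply_of_ne_of_ne hxv hxz, Equiv.swap_apply_of_ne_of_ne hyv hyz] at hxy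
    exact absurd hxy not_cross

theorem exists_mk_mem_image (hσ : RepairSwap z w M σ)
    (hM : IsMatchingOfCard (bridgedCliques A z w) t M) (hz : z ∈ A) (hw : w ∉ A) (h1 : σ ≠ 1) :
    ∃ x ∈ A, ∃ y ∉ A, s(x, y) ∈ M.image (Sym2.map σ) ∧ s(x, y) ≠ s(z, w) := by
  cases hσ with
  | refl => exact absurd rfl h1
  | @swap_pendant v hv hvz _ =>
    have hvw := hM.ne_of_mk_mem hv
    refine ⟨z, hz, v, not_mem_of_mk_mem_edgeSet_bridgedCliques hz hw (hM.1 hv) hvz, ?_, ?_⟩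
    · rw [mk_mem_image_swap, Equiv.swap_apply_right, Equiv.swap_apply_of_ne_of_ne hvw hvz,
        Sym2.eq_swap]
      exact hv
    · rwa [Ne, Sym2.congr_right]
  | @swap_partner u v hv hvz hu =>
    have huz := (hM.ne_of_mk_mem hu).symm
    have huA : u ∈ A := by
      by_contra huA
      obtain ⟨-, rfl⟩ := eq_of_mk_mem_edgeSet_bridgedCliques hz (hM.1 hu) hz huA
      exact hvz (Sym2.congr_left.1 (hM.eq_of_mem hv hu (Sym2.mem_mk_right _ _)
        (Sym2.mem_mk_right _ _)))
    have hvA := not_mem_of_mk_mem_edgeSet_bridgedCliques hz hw (hM.1 hv) hvz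
    refine ⟨u, huA, v, hvA, ?_, ?_⟩
    · rw [mk_mem_image_swap, Equiv.swap_apply_of_ne_of_ne (ne_of_mem_of_not_mem huA hvA) huz,
        Equiv.swap_apply_left, Sym2.eq_swap]
      exact hu
    · intro h
      rcases Sym2.eq_iff.1 h with ⟨h', -⟩ | ⟨h', -⟩
      · exact huz h'
      · exact hw (h' ▸ huA)

theorem eq_of_image_eq {M₁ M₂ : Finset (Sym2 V)} {σ₁ σ₂ : Equiv.Perm V}
    (h₁ : RepairSwap z w M₁ σ₁) (h₂ : RepairSwap z w M₂ σ₂)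
    (hM₁ : IsMatchingOfCard (bridgedCliques A z w) t M₁)
    (hM₂ : IsMatchingOfCard (bridgedCliques A z w) t M₂) (hz : z ∈ A) (hw : w ∉ A)
    (h : M₁.image (Sym2.map σ₁) = M₂.image (Sym2.map σ₂)) : σ₁ = σ₂ := by
  by_cases hcross : ∃ x ∈ A, ∃ y ∉ A, s(x, y) ∈ M₁.image (Sym2.map σ₁) ∧ s(x, y) ≠ s(z, w)
  · obtain ⟨x, hx, y, hy, hxy, hne⟩ := hcross
    rw [h₁.eq_of_mk_mem_image hM₁ hz hw hx hy hxy hne,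
      h₂.eq_of_mk_mem_image hM₂ hz hw hx hy (h ▸ hxy) hne]
  · have hσ₁ : σ₁ = 1 := by_contra fun h1 => hcross (h₁.exists_mk_mem_image hM₁ hz hw h1)
    have hσ₂ : σ₂ = 1 := by_contra fun h1 => hcross (h ▸ h₂.exists_mk_mem_image hM₂ hz hw h1)
    rw [hσ₁, hσ₂]

end RepairSwap

end

theorem matchCount_bridgedCliques_le [Finite V] {A : Set V} {z w : V} (hz : z ∈ A) (hw : w ∉ A)
    (t : ℕ) : matchCount (bridgedCliques A z w) t ≤ matchCount (cliqueWithPendant z w) t := by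
  classical
  refine matchCount_le_of_rel (fun M N => ∃ σ, RepairSwap z w M σ ∧ N = M.image (Sym2.map σ))
    (fun M hM => ?_) ?_
  · obtain ⟨σ, hσ⟩ := exists_repairSwap z w M
    exact ⟨_, hσ.isMatchingOfCard_image hM (ne_of_mem_of_not_mem hz hw), σ, hσ, rfl⟩
  · rintro M₁ M₂ _ hM₁ hM₂ ⟨σ₁, h₁, rfl⟩ ⟨σ₂, h₂, h⟩
    obtain rfl := h₁.eq_of_image_eq h₂ hM₁ hM₂ hz hw h
    exact Finset.image_injective (Sym2.map.injective σ₁.injective) h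

theorem Kmk_two_mul_self_one {m : ℕ} (hm : 1 ≤ m) :
    Kmk (2 * m) m 1 = bridgedCliques {x | x.val < m} ⟨0, by omega⟩ ⟨m, by omega⟩ := by
  ext x y
  simp only [Kmk, bridgedCliques, SimpleGraph.fromRel_adj, SimpleGraph.fromEdgeSet_adj,
    Set.mem_union, Set.mk_mem_sym2_iff, Set.mem_compl_iff, Set.mem_ofPred_eq,
    Set.mem_singleton_iff, Sym2.eq_iff, Fin.ext_iff]
  omega

def cliqueWithPendantHomKstar {m : ℕ} (hm : 1 ≤ m) :
    cliqueWithPendant (⟨0, by omega⟩ : Fin (2 * m)) ⟨m, by omega⟩ →g Kstar (2 * m) 1 where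
  toFun := Equiv.swap ⟨m, by omega⟩ ⟨2 * m - 1, by omega⟩
  map_rel' {x y} h := by
    have hval : ∀ x : Fin (2 * m),
        (Equiv.swap (⟨m, by omega⟩ : Fin (2 * m)) ⟨2 * m - 1, by omega⟩ x).val =
          if x.val = m then 2 * m - 1 else if x.val = 2 * m - 1 then m else x.val := by
      intro x
      rw [Equiv.swap_apply_def]
      split_ifs <;> simp only [Fin.ext_iff] at * <;> omega
    simp only [cliqueWithPendant, Kstar, SimpleGraph.fromRel_adj, SimpleGraph.fromEdgeSet_adj,
      Set.mem_union, Set.mk_mem_sym2_iff, Set.mem_compl_iff,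
      Set.mem_singleton_iff, Sym2.eq_iff, Fin.ext_iff, hval, ne_eq] at h ⊢
    split_ifs at * <;> omega

/-- For every positive integer `m` and `t ≤ m`: `m(K^1_{m,m},t) ≤ m(K^1_{2m-1,1},t)`. -/
theorem stmt12 (m : ℕ) (hm : 1 ≤ m) :
    ∀ t : ℕ, t ≤ m → matchCount (Kmk (2 * m) m 1) t ≤ matchCount (Kstar (2 * m) 1) t := by
  intro t _
  rw [Kmk_two_mul_self_one hm]
  refine (matchCount_bridgedCliques_le ?_ ?_ t).trans
    (matchCount_le_of_injective (cliqueWithPendantHomKstar hm) (Equiv.injective _) t)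
  · exact hm
  · exact lt_irrefl m
end

section
/- Suppose 1 ≤ k ≤ m ≤ ⌊n/2⌋. Then m(K^k_{n-m,m}, t) ≤ m(K^k_{n-1,1}, t) for all t = 0, 1, …, ⌊n/2⌋. -/
/-!
Put `A = {0, …, n-m-1}`, `B = {n-m, …, n-1}`, `z = 0`, `ℓ = n-1` and `p = n-m`, the partner
of `z` in `B`. A matching of `K^k_{n-m,m}` is already a matching of `K^k_{n-1,1}` unless it
pairs `ℓ` with some `v ∈ B`. Such a matching is relabelled by a transposition: by `(z ℓ)` if
either `z` is unmatched and `v ≠ p`, or `z` is matched to the partner `v - p` of `v`; by `(z v)`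
otherwise. The result is a matching of `K^k_{n-1,1}` of the same size, containing the edge
`{z, v}` (resp. `{z, ℓ}`) outside `K^k_{n-m,m}`, and the transposition used can be read off it,
so the relabelling is injective.
-/

open Finset

section Matchings

variable {V : Type*}

def IsVertexDisjoint (M : Finset (Sym2 V)) : Prop :=
  (M : Set (Sym2 V)).Pairwise fun e f => ∀ v, ¬(v ∈ e ∧ v ∈ f)

open Classical in
/-- The vertex matched to `x` in `M`, or `x` itself when `x` is unmatched. -/
noncomputable def mate (M : Finset (Sym2 V)) (x : V) : V :=
  if h : ∃ y, s(x, y) ∈ M then h.choose else x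

variable {M : Finset (Sym2 V)}

lemma mate_eq_self {x : V} (h : ∀ y, s(x, y) ∉ M) : mate M x = x := by
  rw [mate, dif_neg (not_exists.2 h)]

lemma mk_mate_mem {x : V} (h : mate M x ≠ x) : s(x, mate M x) ∈ M := by
  by_cases hx : ∃ y, s(x, y) ∈ M
  · rw [mate, dif_pos hx]
    exact hx.choose_spec
  · exact absurd (mate_eq_self (not_exists.1 hx)) h

namespace IsVertexDisjoint

lemma eq_of_mem_of_mem (hM : IsVertexDisjoint M) {e f : Sym2 V} {x : V} (he : e ∈ M)
    (hf : f ∈ M) (hxe : x ∈ e) (hxf : x ∈ f) : e = f := by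
  by_contra hef
  exact hM he hf hef x ⟨hxe, hxf⟩

lemma mate_eq (hM : IsVertexDisjoint M) {x y : V} (h : s(x, y) ∈ M) : mate M x = y := by
  have hx : ∃ y, s(x, y) ∈ M := ⟨y, h⟩
  rw [mate, dif_pos hx]
  exact Sym2.congr_right.1
    (hM.eq_of_mem_of_mem hx.choose_spec h (Sym2.mem_mk_left _ _) (Sym2.mem_mk_left _ _))

lemma eq_mk_mate (hM : IsVertexDisjoint M) {f : Sym2 V} {x : V} (hf : f ∈ M) (hx : x ∈ f) :
    f = s(x, mate M x) := by
  obtain ⟨y, rfl⟩ := Sym2.mem_iff_exists.1 hx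
  rw [hM.mate_eq hf]

lemma notMem_of_mk_mem (hM : IsVertexDisjoint M) {x y z w : V} (hxy : s(x, y) ∈ M)
    (hzw : s(z, w) ∈ M) (hz : z ∉ s(x, y)) : w ∉ s(x, y) := fun hw => by
  rw [← hM.eq_of_mem_of_mem hzw hxy (Sym2.mem_mk_right _ _) hw] at hz
  exact hz (Sym2.mem_mk_left _ _)

lemma mem_cases_of_mk_mem (hM : IsVertexDisjoint M) {f : Sym2 V} {x y z : V}
    (hxy : s(x, y) ∈ M) (hz : z ∉ s(x, y)) (hf : f ∈ M) :
    f = s(x, y) ∨ (f = s(z, mate M z) ∧ mate M z ∉ s(x, y)) ∨ (z ∉ f ∧ x ∉ f ∧ y ∉ f) := by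
  by_cases hxf : x ∈ f
  · exact .inl (hM.eq_of_mem_of_mem hf hxy hxf (Sym2.mem_mk_left _ _))
  by_cases hyf : y ∈ f
  · exact .inl (hM.eq_of_mem_of_mem hf hxy hyf (Sym2.mem_mk_right _ _))
  by_cases hzf : z ∈ f
  · have hfz := hM.eq_mk_mate hf hzf
    exact .inr (.inl ⟨hfz, hM.notMem_of_mk_mem hxy (hfz ▸ hf) hz⟩)
  exact .inr (.inr ⟨hzf, hxf, hyf⟩)

end IsVertexDisjoint

variable [DecidableEq V]

lemma Sym2.map_swap_of_notMem {a b : V} {e : Sym2 V} (ha : a ∉ e) (hb : b ∉ e) :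
    e.map (Equiv.swap a b) = e := by
  induction e using Sym2.ind with
  | _ x y =>
    simp only [Sym2.mem_iff, not_or] at ha hb
    rw [Sym2.map_mk, Equiv.swap_apply_of_ne_of_ne (Ne.symm ha.1) (Ne.symm hb.1),
      Equiv.swap_apply_of_ne_of_ne (Ne.symm ha.2) (Ne.symm hb.2)]

lemma Sym2.map_swap_map_swap (a b : V) (e : Sym2 V) :
    (e.map (Equiv.swap a b)).map (Equiv.swap a b) = e := by
  induction e using Sym2.ind with
  | _ x y => simp

def swapEdges (a b : V) (M : Finset (Sym2 V)) : Finset (Sym2 V) :=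
  M.image (Sym2.map (Equiv.swap a b))

lemma mem_swapEdges {a b : V} {e : Sym2 V} :
    e ∈ swapEdges a b M ↔ e.map (Equiv.swap a b) ∈ M := by
  refine ⟨fun h => ?_, fun h => mem_image.2 ⟨_, h, Sym2.map_swap_map_swap a b e⟩⟩
  obtain ⟨f, hf, rfl⟩ := mem_image.1 h
  rwa [Sym2.map_swap_map_swap]

lemma swapEdges_involutive (a b : V) : Function.Involutive (swapEdges a b) := fun M => by
  ext e
  rw [mem_swapEdges, mem_swapEdges, Sym2.map_swap_map_swap]

lemma swapEdges_self (a : V) (M : Finset (Sym2 V)) : swapEdges a a M = M := by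
  simp [swapEdges, Equiv.swap_self]

lemma card_swapEdges (a b : V) (M : Finset (Sym2 V)) : (swapEdges a b M).card = M.card :=
  card_image_of_injective _ (Sym2.map.injective (Equiv.injective _))

lemma coe_swapEdges_subset_iff {a b : V} {S : Set (Sym2 V)} :
    ↑(swapEdges a b M) ⊆ S ↔ ∀ f ∈ M, f.map (Equiv.swap a b) ∈ S := by
  simp [swapEdges, Set.subset_def]

lemma IsVertexDisjoint.swapEdges (hM : IsVertexDisjoint M) (a b : V) :
    IsVertexDisjoint (swapEdges a b M) := by
  intro e he f hf hef x ⟨hxe, hxf⟩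
  refine hM (mem_swapEdges.1 he) (mem_swapEdges.1 hf) ?_ (Equiv.swap a b x)
    ⟨Sym2.mem_map.2 ⟨x, hxe, rfl⟩, Sym2.mem_map.2 ⟨x, hxf, rfl⟩⟩
  intro h
  exact hef (by rw [← Sym2.map_swap_map_swap a b e, h, Sym2.map_swap_map_swap])

end Matchings

theorem Nat.card_le_card_of_involutive_of_decode {X ι : Type*} {P Q : X → Prop}
    [Finite {x // Q x}] (σ : ι → X → X) (hσ : ∀ i, Function.Involutive (σ i)) (c d : X → ι)
    (hQ : ∀ x, P x → Q (σ (c x) x)) (hd : ∀ x, P x → d (σ (c x) x) = c x) :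
    Nat.card {x // P x} ≤ Nat.card {x // Q x} := by
  refine Nat.card_le_card_of_injective (fun x => ⟨σ (c x.1) x.1, hQ x.1 x.2⟩) ?_
  rintro ⟨x, hx⟩ ⟨y, hy⟩ h
  have hxy : σ (c x) x = σ (c y) y := congrArg Subtype.val h
  have hc : c x = c y := by rw [← hd x hx, ← hd y hy, hxy]
  ext
  calc x = σ (c x) (σ (c x) x) := (hσ _ x).symm
    _ = y := by rw [hxy, hc, hσ]

section Switching

variable {n m k : ℕ} {z ℓ p : Fin n} {M : Finset (Sym2 (Fin n))}

lemma kstar_mem_edgeSet_of_kmk {f : Sym2 (Fin n)} (hℓ : ℓ.val = n - 1)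
    (hf : f ∈ (Kmk n m k).edgeSet) (hℓf : ℓ ∉ f) : f ∈ (Kstar n k).edgeSet := by
  induction f using Sym2.ind with
  | _ x y =>
    simp only [Sym2.mem_iff, not_or] at hℓf
    simp only [SimpleGraph.mem_edgeSet, Kmk, Kstar, SimpleGraph.fromRel_adj] at hf ⊢
    omega

/-- The `c` of the transposition `(z c)` applied to `M`; `c = z` (no change) unless `ℓ` is
matched into `B`. -/
noncomputable def switchPartner (k : ℕ) (z ℓ p : Fin n) (M : Finset (Sym2 (Fin n))) : Fin n :=
  if p ≤ mate M ℓ ∧ mate M ℓ ≠ ℓ then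
    if mate M ℓ ≠ p ∧
        (mate M z = z ∨ ((mate M z).val < k ∧ (mate M ℓ).val = p.val + (mate M z).val)) then ℓ
    else mate M ℓ
  else z

open Classical in
/-- Recovers `switchPartner k z ℓ p M` from the relabelled matching `N`. Under `(z v)` the edge
`{z, u}` of `M` becomes `{v, u}`, the only edge of `N` besides `{z, ℓ}` outside `G` unless
`u = p`; and if `z` is unmatched in `M` then `v = p`. -/
noncomputable def switchDecode (G : SimpleGraph (Fin n)) (z ℓ p : Fin n)
    (N : Finset (Sym2 (Fin n))) : Fin n :=
  if ↑N ⊆ G.edgeSet then z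
  else if s(z, ℓ) ∉ N then ℓ
  else if h : ∃ e ∈ N, e ∉ G.edgeSet ∧ e ≠ s(z, ℓ) then h.choose.sup
  else mate N p

lemma subset_kstar_of_not_switch (hM : IsVertexDisjoint M) (hMG : ↑M ⊆ (Kmk n m k).edgeSet)
    (hℓ : ℓ.val = n - 1) (hp : p.val = n - m) (hv : ¬(p ≤ mate M ℓ ∧ mate M ℓ ≠ ℓ)) :
    ↑M ⊆ (Kstar n k).edgeSet := by
  intro f hf
  by_cases hℓf : ℓ ∈ f
  · have hadj := hMG (hM.eq_mk_mate hf hℓf ▸ hf)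
    rw [SimpleGraph.mem_edgeSet] at hadj
    have := hadj.ne
    rw [hM.eq_mk_mate hf hℓf]
    simp only [SimpleGraph.mem_edgeSet, Kmk, Kstar, SimpleGraph.fromRel_adj] at hadj ⊢
    omega
  · exact kstar_mem_edgeSet_of_kmk hℓ (hMG hf) hℓf

lemma swapEdges_last_subset_kstar (hM : IsVertexDisjoint M) (hMG : ↑M ⊆ (Kmk n m k).edgeSet)
    (hz : z.val = 0) (hℓ : ℓ.val = n - 1) (hp : p.val = n - m) (hmn : m < n)
    (hv : p ≤ mate M ℓ ∧ mate M ℓ ≠ ℓ) (hu : mate M z = z ∨ (mate M z).val < k) :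
    ↑(swapEdges z ℓ M) ⊆ (Kstar n k).edgeSet := by
  set v := mate M ℓ
  have hvM : s(ℓ, v) ∈ M := mk_mate_mem hv.2
  have hzv : z ∉ s(ℓ, v) := by simp only [Sym2.mem_iff, not_or]; omega
  rw [coe_swapEdges_subset_iff]
  intro f hf
  rcases hM.mem_cases_of_mk_mem hvM hzv hf with rfl | ⟨rfl, hu'⟩ | ⟨hzf, hℓf, -⟩
  · rw [Sym2.map_mk, Equiv.swap_apply_right, Equiv.swap_apply_of_ne_of_ne (by omega) hv.2]
    simp only [SimpleGraph.mem_edgeSet, Kstar, SimpleGraph.fromRel_adj]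
    omega
  · have hzu := (SimpleGraph.mem_edgeSet _).1 (hMG hf) |>.ne
    simp only [Sym2.mem_iff, not_or] at hu'
    rw [Sym2.map_mk, Equiv.swap_apply_left, Equiv.swap_apply_of_ne_of_ne hzu.symm hu'.1]
    simp only [SimpleGraph.mem_edgeSet, Kstar, SimpleGraph.fromRel_adj]
    omega
  · rw [Sym2.map_swap_of_notMem hzf hℓf]
    exact kstar_mem_edgeSet_of_kmk hℓ (hMG hf) hℓf

lemma switchDecode_swapEdges_last (hM : IsVertexDisjoint M) (hz : z.val = 0)
    (hp : p.val = n - m) (hmn : m < n) (hv : p ≤ mate M ℓ ∧ mate M ℓ ≠ ℓ) (hvp : mate M ℓ ≠ p) :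
    switchDecode (Kmk n m k) z ℓ p (swapEdges z ℓ M) = ℓ := by
  set v := mate M ℓ
  have hvM : s(ℓ, v) ∈ M := mk_mate_mem hv.2
  have hzvN : s(z, v) ∈ swapEdges z ℓ M := by
    rwa [mem_swapEdges, Sym2.map_mk, Equiv.swap_apply_left,
      Equiv.swap_apply_of_ne_of_ne (by omega) hv.2]
  have hzv : ¬ (Kmk n m k).Adj z v := by
    simp only [Kmk, SimpleGraph.fromRel_adj]
    omega
  have hzℓN : s(z, ℓ) ∉ swapEdges z ℓ M := by
    rw [mem_swapEdges, Sym2.map_mk, Equiv.swap_apply_left, Equiv.swap_apply_right]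
    intro h
    have := hM.mate_eq h
    omega
  rw [switchDecode, if_neg fun h => hzv (h hzvN), if_pos hzℓN]

lemma swapEdges_mate_subset_kstar (hM : IsVertexDisjoint M) (hMG : ↑M ⊆ (Kmk n m k).edgeSet)
    (hz : z.val = 0) (hℓ : ℓ.val = n - 1) (hp : p.val = n - m) (hmn : m < n) (hk : 0 < k)
    (hv : p ≤ mate M ℓ ∧ mate M ℓ ≠ ℓ) :
    ↑(swapEdges z (mate M ℓ) M) ⊆ (Kstar n k).edgeSet := by
  set v := mate M ℓ
  have hvM : s(ℓ, v) ∈ M := mk_mate_mem hv.2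
  have hzv : z ∉ s(ℓ, v) := by simp only [Sym2.mem_iff, not_or]; omega
  rw [coe_swapEdges_subset_iff]
  intro f hf
  rcases hM.mem_cases_of_mk_mem hvM hzv hf with rfl | ⟨rfl, hu'⟩ | ⟨hzf, hℓf, hvf⟩
  · rw [Sym2.map_mk, Equiv.swap_apply_right, Equiv.swap_apply_of_ne_of_ne (by omega) hv.2.symm]
    simp only [SimpleGraph.mem_edgeSet, Kstar, SimpleGraph.fromRel_adj]
    omega
  · have hzu := (SimpleGraph.mem_edgeSet _).1 (hMG hf) |>.ne
    simp only [Sym2.mem_iff, not_or] at hu'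
    rw [Sym2.map_mk, Equiv.swap_apply_left, Equiv.swap_apply_of_ne_of_ne hzu.symm hu'.2]
    simp only [SimpleGraph.mem_edgeSet, Kstar, SimpleGraph.fromRel_adj]
    omega
  · rw [Sym2.map_swap_of_notMem hzf hvf]
    exact kstar_mem_edgeSet_of_kmk hℓ (hMG hf) hℓf

lemma eq_of_mem_swapEdges_mate_of_notMem_kmk (hM : IsVertexDisjoint M)
    (hMG : ↑M ⊆ (Kmk n m k).edgeSet) (hz : z.val = 0) (hℓ : ℓ.val = n - 1)
    (hp : p.val = n - m) (hmn : m < n) (hv : p ≤ mate M ℓ ∧ mate M ℓ ≠ ℓ) {e : Sym2 (Fin n)}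
    (he : e ∈ swapEdges z (mate M ℓ) M) (heG : e ∉ (Kmk n m k).edgeSet) (hezℓ : e ≠ s(z, ℓ)) :
    e = s(mate M ℓ, mate M z) ∧ mate M z ∉ s(ℓ, mate M ℓ) := by
  set v := mate M ℓ
  have hvM : s(ℓ, v) ∈ M := mk_mate_mem hv.2
  have hzv : z ∉ s(ℓ, v) := by simp only [Sym2.mem_iff, not_or]; omega
  rw [mem_swapEdges] at he
  rw [← Sym2.map_swap_map_swap z v e] at heG hezℓ ⊢
  rcases hM.mem_cases_of_mk_mem hvM hzv he with h | ⟨h, hu'⟩ | ⟨hzf, -, hvf⟩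
  · refine absurd ?_ hezℓ
    rw [h, Sym2.map_mk, Equiv.swap_apply_right,
      Equiv.swap_apply_of_ne_of_ne (by omega) hv.2.symm, Sym2.eq_swap]
  · have hzu := (SimpleGraph.mem_edgeSet _).1 (hMG (h ▸ he)) |>.ne
    refine ⟨?_, hu'⟩
    simp only [Sym2.mem_iff, not_or] at hu'
    rw [h, Sym2.map_mk, Equiv.swap_apply_left, Equiv.swap_apply_of_ne_of_ne hzu.symm hu'.2]
  · rw [Sym2.map_swap_of_notMem hzf hvf] at heG
    exact absurd (hMG he) heG

lemma switchDecode_swapEdges_mate (hM : IsVertexDisjoint M) (hMG : ↑M ⊆ (Kmk n m k).edgeSet)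
    (hz : z.val = 0) (hℓ : ℓ.val = n - 1) (hp : p.val = n - m) (hmn : m < n)
    (hv : p ≤ mate M ℓ ∧ mate M ℓ ≠ ℓ)
    (hsw : ¬(mate M ℓ ≠ p ∧
      (mate M z = z ∨ ((mate M z).val < k ∧ (mate M ℓ).val = p.val + (mate M z).val)))) :
    switchDecode (Kmk n m k) z ℓ p (swapEdges z (mate M ℓ) M) = mate M ℓ := by
  set v := mate M ℓ
  set u := mate M z
  set N := swapEdges z v M
  have hvM : s(ℓ, v) ∈ M := mk_mate_mem hv.2
  have hzℓN : s(z, ℓ) ∈ N := by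
    rwa [mem_swapEdges, Sym2.map_mk, Equiv.swap_apply_left,
      Equiv.swap_apply_of_ne_of_ne (by omega) hv.2.symm, Sym2.eq_swap]
  have hzℓ : ¬ (Kmk n m k).Adj z ℓ := by
    simp only [Kmk, SimpleGraph.fromRel_adj]
    omega
  rw [switchDecode, if_neg fun h => hzℓ (h hzℓN), if_neg (not_not.2 hzℓN)]
  by_cases hbad : ∃ e ∈ N, e ∉ (Kmk n m k).edgeSet ∧ e ≠ s(z, ℓ)
  · rw [dif_pos hbad]
    obtain ⟨he, heG, hezℓ⟩ := hbad.choose_spec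
    obtain ⟨heq, hu'⟩ :=
      eq_of_mem_swapEdges_mate_of_notMem_kmk hM hMG hz hℓ hp hmn hv he heG hezℓ
    rw [heq] at heG
    simp only [Sym2.mem_iff, not_or] at hu'
    simp only [SimpleGraph.mem_edgeSet, Kmk, SimpleGraph.fromRel_adj] at heG
    rw [heq, Sym2.sup_mk]
    exact max_eq_left (by omega)
  rw [dif_neg hbad]
  by_cases hzu : u = z
  · have hvp : v = p := by_contra fun h => hsw ⟨h, .inl hzu⟩
    rw [← hvp]
    refine mate_eq_self fun y hy => ?_
    rw [mem_swapEdges, Sym2.map_mk, Equiv.swap_apply_right] at hy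
    have hloop : s(z, z) ∈ M := by
      rwa [← hM.mate_eq hy, show mate M z = z from hzu] at hy
    exact (SimpleGraph.mem_edgeSet _).1 (hMG hloop) |>.ne rfl
  have huM : s(z, u) ∈ M := mk_mate_mem hzu
  have hu' := hM.notMem_of_mk_mem hvM huM (by simp only [Sym2.mem_iff, not_or]; omega)
  simp only [Sym2.mem_iff, not_or] at hu'
  have hvuN : s(v, u) ∈ N := by
    rwa [mem_swapEdges, Sym2.map_mk, Equiv.swap_apply_right,
      Equiv.swap_apply_of_ne_of_ne hzu hu'.2]
  have hvu : (Kmk n m k).Adj v u := by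
    by_contra h
    exact hbad ⟨_, hvuN, h, by rw [Ne, Sym2.eq_iff]; omega⟩
  have hzu' := (SimpleGraph.mem_edgeSet _).1 (hMG huM)
  simp only [Kmk, SimpleGraph.fromRel_adj] at hvu hzu'
  have hup : u = p := by omega
  rw [hup, Sym2.eq_swap] at hvuN
  exact (hM.swapEdges z v).mate_eq hvuN

lemma switchPartner_spec (hM : IsVertexDisjoint M) (hMG : ↑M ⊆ (Kmk n m k).edgeSet)
    (hz : z.val = 0) (hℓ : ℓ.val = n - 1) (hp : p.val = n - m) (hmn : m < n) (hk : 0 < k) :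
    ↑(swapEdges z (switchPartner k z ℓ p M) M) ⊆ (Kstar n k).edgeSet ∧
      switchDecode (Kmk n m k) z ℓ p (swapEdges z (switchPartner k z ℓ p M) M) =
        switchPartner k z ℓ p M := by
  unfold switchPartner
  split_ifs with hv hsw
  · exact ⟨swapEdges_last_subset_kstar hM hMG hz hℓ hp hmn hv (hsw.2.imp_right And.left),
      switchDecode_swapEdges_last hM hz hp hmn hv hsw.1⟩
  · exact ⟨swapEdges_mate_subset_kstar hM hMG hz hℓ hp hmn hk hv,
      switchDecode_swapEdges_mate hM hMG hz hℓ hp hmn hv hsw⟩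
  · rw [swapEdges_self]
    exact ⟨subset_kstar_of_not_switch hM hMG hℓ hp hv, by rw [switchDecode, if_pos hMG]⟩

theorem matchCount_kmk_le_kstar (hk : 0 < k) (hm : 0 < m) (hmn : m < n) (t : ℕ) :
    matchCount (Kmk n m k) t ≤ matchCount (Kstar n k) t := by
  let z : Fin n := ⟨0, by omega⟩
  let ℓ : Fin n := ⟨n - 1, by omega⟩
  let p : Fin n := ⟨n - m, by omega⟩
  refine Nat.card_le_card_of_involutive_of_decode (fun c => swapEdges z c)
    (swapEdges_involutive z) (switchPartner k z ℓ p) (switchDecode (Kmk n m k) z ℓ p) ?_ ?_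
  · rintro M ⟨hMG, hcard, hM⟩
    exact ⟨(switchPartner_spec hM hMG rfl rfl rfl hmn hk).1, (card_swapEdges _ _ _).trans hcard,
      IsVertexDisjoint.swapEdges hM _ _⟩
  · rintro M ⟨hMG, -, hM⟩
    exact (switchPartner_spec hM hMG rfl rfl rfl hmn hk).2

end Switching

/-- For `1 ≤ k ≤ m ≤ ⌊n/2⌋`: `m(K^k_{n-m,m},t) ≤ m(K^k_{n-1,1},t)` for all `t ≤ ⌊n/2⌋`. -/
theorem stmt15 (n m k : ℕ) (hk : 1 ≤ k) (hkm : k ≤ m) (hm2 : m ≤ n / 2) :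
    ∀ t : ℕ, t ≤ n / 2 → matchCount (Kmk n m k) t ≤ matchCount (Kstar n k) t :=
  fun t _ => matchCount_kmk_le_kstar hk (by omega) (by omega) t
end
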